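/- Let X₁, …, Xₙ be independent random variables, each uniformly distributed on (0,1], let A ∈ ℝ^{n×n} be an invertible matrix, define (Y₁, …, Y_{n−1}, Z)ᵀ = A·(X₁, …, Xₙ)ᵀ, let g : ℝ^{n−1} → ℝ be a measurable function, and let ε > 0. Then the probability that Z ∈ [g(Y₁,…,Y_{n−1}), g(Y₁,…,Y_{n−1}) + ε] is at most 2ε · ‖A⁻¹eₙ‖₁, where ‖·‖₁ is the ℓ₁-norm and eₙ is the n-th standard basis vector of ℝⁿ. -/

import Mathlib

open scoped RealInnerProductSpace BigOperators
open MeasureTheory ProbabilityTheory Matrix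

noncomputable section

/-- Identity map from plain vectors to Euclidean space (L2 norm). -/
def toE {n : ℕ} (x : Fin n → ℝ) : EuclideanSpace ℝ (Fin n) := WithLp.toLp 2 x

/-- Identity map from Euclidean space to plain vectors. -/
def ofE {n : ℕ} (x : EuclideanSpace ℝ (Fin n)) : Fin n → ℝ := WithLp.ofLp x

/-- Normalization N(x) = x / ‖x‖. -/
def nrm {n : ℕ} (x : EuclideanSpace ℝ (Fin n)) : EuclideanSpace ℝ (Fin n) := ‖x‖⁻¹ • x

/-- δ̂(S, v): the norm of the projection of v onto the orthogonal complement of span S,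
divided by ‖v‖ (the sine of the angle between v and span S). -/
def deltaHat {n : ℕ} (S : Set (EuclideanSpace ℝ (Fin n))) (v : EuclideanSpace ℝ (Fin n)) : ℝ :=
  ‖(Submodule.orthogonalProjectionOnto ((Submodule.span ℝ S)ᗮ) v : EuclideanSpace ℝ (Fin n))‖ / ‖v‖

/-- δ(z₁, …, zₙ) = min over k of δ̂({z_i : i ≠ k}, z_k). -/
def deltaVec {n : ℕ} (z : Fin n → EuclideanSpace ℝ (Fin n)) : ℝ :=
  ⨅ k : Fin n, deltaHat (z '' {i | i ≠ k}) (z k)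

/-- δ(A) for rows a₁, …, a_m: the minimum of δ over all choices of n linearly
independent rows. -/
def deltaRows {m n : ℕ} (a : Fin m → EuclideanSpace ℝ (Fin n)) : ℝ :=
  sInf { d | ∃ f : Fin n → Fin m, LinearIndependent ℝ (a ∘ f) ∧ d = deltaVec (a ∘ f) }

/-- A vertex of the polyhedron {x : ∀ i, ⟪a i, x⟫ ≤ b i}. -/
def IsVertex {m n : ℕ} (a : Fin m → EuclideanSpace ℝ (Fin n)) (b : Fin m → ℝ)
    (z : EuclideanSpace ℝ (Fin n)) : Prop :=
  (∀ i, ⟪a i, z⟫ ≤ b i) ∧ Submodule.span ℝ (a '' {i | ⟪a i, z⟫ = b i}) = ⊤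

/-- Two distinct vertices are neighboring if n−1 linearly independent constraints are
tight at both. -/
def Neighboring {m n : ℕ} (a : Fin m → EuclideanSpace ℝ (Fin n)) (b : Fin m → ℝ)
    (z₁ z₂ : EuclideanSpace ℝ (Fin n)) : Prop :=
  IsVertex a b z₁ ∧ IsVertex a b z₂ ∧ z₁ ≠ z₂ ∧
    ∃ s : Finset (Fin m), s.card = n - 1 ∧
      LinearIndependent ℝ (fun i : s => a i) ∧
      ∀ i ∈ s, ⟪a i, z₁⟫ = b i ∧ ⟪a i, z₂⟫ = b i

/-- The largest absolute value of a sub-determinant of size k. -/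
def subdetSup {m n : ℕ} (A : Matrix (Fin m) (Fin n) ℝ) (k : ℕ) : ℝ :=
  ⨆ (f : Fin k → Fin m) (_ : Function.Injective f) (g : Fin k → Fin n)
    (_ : Function.Injective g), |(A.submatrix f g).det|

end

/-!
Put `c = A⁻¹ eₙ` and `h x = (A x)ₙ - g ((A x)₁, …, (A x)ₙ₋₁)`. Since `A c = eₙ`, moving `x`
along `c` changes only the last coordinate of `A x`, so `h (x + s c) = h x + s`, and the event is
`h (X₁, …, Xₙ) ∈ [0, ε]` with `(X₁, …, Xₙ)` uniform on the unit cube. Let `E` be the part of the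
cube where `h ∈ [0, ε]`. Its translates by `2ε j c`, `j = 0, …, K`, are pairwise disjoint, because
`h` lies in `[2εj, 2εj + ε]` on the `j`-th one, and they lie in the union of the translated cubes.
Each translated cube adds at most `2ε ‖c‖₁` of volume to the previous one, so
`(K + 1) vol E ≤ 1 + 2εK ‖c‖₁` for every `K`, which gives `vol E ≤ 2ε ‖c‖₁`.
-/

open Set Filter Topology
open scoped ENNReal

theorem ENNReal.le_of_forall_natCast_mul_le_add {a b d : ℝ≥0∞} (hb : b ≠ ∞)
    (h : ∀ K : ℕ, (K : ℝ≥0∞) * a ≤ b + K * d) : a ≤ d := by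
  have hlim : Tendsto (fun K : ℕ => b * (K : ℝ≥0∞)⁻¹ + d) atTop (𝓝 d) := by
    simpa using
      (ENNReal.Tendsto.const_mul ENNReal.tendsto_inv_nat_nhds_zero (Or.inr hb)).add_const d
  refine ge_of_tendsto hlim (eventually_atTop.2 ⟨1, fun K hK => ?_⟩)
  have hK : (K : ℝ≥0∞)⁻¹ * K = 1 :=
    ENNReal.inv_mul_cancel (by exact_mod_cast (by omega : K ≠ 0)) (ENNReal.natCast_ne_top K)
  calc a = (K : ℝ≥0∞)⁻¹ * (K * a) := by rw [← mul_assoc, hK, one_mul]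
    _ ≤ (K : ℝ≥0∞)⁻¹ * (b + K * d) := by gcongr; exact h K
    _ = b * (K : ℝ≥0∞)⁻¹ + d := by rw [mul_add, ← mul_assoc, hK, one_mul, mul_comm]

theorem measure_biUnion_range_succ_le {α : Type*} [MeasurableSpace α] (μ : Measure α)
    {B : ℕ → Set α} {D : ℝ≥0∞} (hB : ∀ j, μ (B (j + 1) \ B j) ≤ D) (K : ℕ) :
    μ (⋃ j ∈ Finset.range (K + 1), B j) ≤ μ (B 0) + K * D := by
  induction K with
  | zero => simp
  | succ K ih =>
    have hsub : ⋃ j ∈ Finset.range (K + 2), B j ⊆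
        (⋃ j ∈ Finset.range (K + 1), B j) ∪ (B (K + 1) \ B K) := by
      rw [Finset.range_add_one, Finset.set_biUnion_insert]
      intro x hx
      by_cases hxK : x ∈ B K
      · exact Or.inl (mem_biUnion (Finset.self_mem_range_succ K) hxK)
      · rcases hx with hx | hx
        · exact Or.inr ⟨hx, hxK⟩
        · exact Or.inl hx
    calc μ (⋃ j ∈ Finset.range (K + 2), B j)
        ≤ μ (⋃ j ∈ Finset.range (K + 1), B j) + μ (B (K + 1) \ B K) :=
          (measure_mono hsub).trans (measure_union_le _ _)
      _ ≤ μ (B 0) + K * D + D := add_le_add ih (hB K)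
      _ = μ (B 0) + ↑(K + 1) * D := by push_cast; ring

theorem Real.volume_Ioc_add_one_sdiff_le (a b : ℝ) :
    volume (Ioc a (a + 1) \ Ioc b (b + 1)) ≤ ENNReal.ofReal |a - b| := by
  rcases le_total a b with hab | hab
  · calc volume (Ioc a (a + 1) \ Ioc b (b + 1)) ≤ volume (Ioc a b) :=
          measure_mono fun t ⟨⟨hat, hta⟩, htb⟩ => ⟨hat, not_lt.1 fun hbt => htb ⟨hbt, by linarith⟩⟩
      _ = ENNReal.ofReal |a - b| := by
        rw [Real.volume_Ioc, abs_sub_comm, abs_of_nonneg (by linarith)]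
  · calc volume (Ioc a (a + 1) \ Ioc b (b + 1)) ≤ volume (Ioc (b + 1) (a + 1)) :=
          measure_mono fun t ⟨⟨hat, hta⟩, htb⟩ =>
            ⟨not_le.1 fun htb' => htb ⟨by linarith, htb'⟩, hta⟩
      _ = ENNReal.ofReal |a - b| := by rw [Real.volume_Ioc, abs_of_nonneg (by linarith)]; ring_nf

section UnitCube

variable {ι : Type*}

def unitCube (a : ι → ℝ) : Set (ι → ℝ) := univ.pi fun i => Ioc (a i) (a i + 1)

theorem measurableSet_unitCube [Countable ι] (a : ι → ℝ) : MeasurableSet (unitCube a) :=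
  .univ_pi fun _ => measurableSet_Ioc

theorem volume_unitCube [Fintype ι] (a : ι → ℝ) : volume (unitCube a) = 1 := by
  simp [unitCube, volume_pi_pi, Real.volume_Ioc]

theorem sub_mem_unitCube_iff {a x v : ι → ℝ} : x - v ∈ unitCube a ↔ x ∈ unitCube (a + v) := by
  simp only [unitCube, mem_univ_pi, mem_Ioc, Pi.sub_apply, Pi.add_apply]
  refine forall_congr' fun i => ?_
  constructor <;> rintro ⟨h1, h2⟩ <;> constructor <;> linarith

theorem volume_unitCube_sdiff_le [Fintype ι] (a b : ι → ℝ) :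
    volume (unitCube a \ unitCube b) ≤ ENNReal.ofReal (∑ i, |a i - b i|) := by
  classical
  set S : ι → Set ℝ := fun i => Ioc (a i) (a i + 1)
  have hsub : unitCube a \ unitCube b ⊆
      ⋃ i, univ.pi (Function.update S i (S i \ Ioc (b i) (b i + 1))) := by
    intro x ⟨hxa, hxb⟩
    simp only [unitCube, mem_univ_pi, not_forall] at hxa hxb
    obtain ⟨i, hi⟩ := hxb
    refine mem_iUnion.2 ⟨i, mem_univ_pi.2 fun j => ?_⟩
    rcases eq_or_ne j i with rfl | hji
    · rw [Function.update_self]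
      exact ⟨hxa j, hi⟩
    · rw [Function.update_of_ne hji]
      exact hxa j
  have hslab : ∀ i, volume (univ.pi (Function.update S i (S i \ Ioc (b i) (b i + 1))))
      ≤ ENNReal.ofReal |a i - b i| := by
    intro i
    rw [volume_pi_pi, Finset.prod_eq_single i (fun j _ hji => by simp [hji, S, Real.volume_Ioc])
      (by simp)]
    simpa [S] using Real.volume_Ioc_add_one_sdiff_le (a i) (b i)
  calc volume (unitCube a \ unitCube b)
      ≤ ∑ i, volume (univ.pi (Function.update S i (S i \ Ioc (b i) (b i + 1)))) :=
        (measure_mono hsub).trans (measure_iUnion_fintype_le _ _)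
    _ ≤ ∑ i, ENNReal.ofReal |a i - b i| := Finset.sum_le_sum fun i _ => hslab i
    _ = ENNReal.ofReal (∑ i, |a i - b i|) :=
        (ENNReal.ofReal_sum_of_nonneg fun i _ => abs_nonneg _).symm

theorem volume_unitCube_add_smul_sdiff_le [Fintype ι] (a c : ι → ℝ) (s t : ℝ) :
    volume (unitCube (a + s • c) \ unitCube (a + t • c))
      ≤ ENNReal.ofReal (|s - t| * ∑ i, |c i|) := by
  refine (volume_unitCube_sdiff_le _ _).trans (le_of_eq ?_)
  simp only [Pi.add_apply, Pi.smul_apply, smul_eq_mul, add_sub_add_left_eq_sub, ← sub_mul,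
    abs_mul, Finset.mul_sum]

theorem preimage_sub_smul_unitCube_inter_preimage_Icc {c : ι → ℝ} {h : (ι → ℝ) → ℝ}
    (hshift : ∀ x (s : ℝ), h (x + s • c) = h x + s) (a : ι → ℝ) (ε s : ℝ) :
    (· - s • c) ⁻¹' (unitCube a ∩ h ⁻¹' Icc 0 ε) = unitCube (a + s • c) ∩ h ⁻¹' Icc s (s + ε) := by
  ext x
  have hx : h x = h (x - s • c) + s := by rw [← hshift, sub_add_cancel]
  simp only [mem_preimage, mem_inter_iff, sub_mem_unitCube_iff, mem_Icc, hx]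
  constructor <;> rintro ⟨h1, h2, h3⟩ <;> exact ⟨h1, by linarith, by linarith⟩

theorem volume_unitCube_inter_preimage_Icc_le [Fintype ι] (c : ι → ℝ) {h : (ι → ℝ) → ℝ}
    (hh : Measurable h) (hshift : ∀ x (s : ℝ), h (x + s • c) = h x + s) {ε : ℝ} (hε : 0 < ε)
    (a : ι → ℝ) :
    volume (unitCube a ∩ h ⁻¹' Icc 0 ε) ≤ ENNReal.ofReal (2 * ε * ∑ i, |c i|) := by
  set E := unitCube a ∩ h ⁻¹' Icc 0 ε
  set w : ℕ → ℝ := fun j => 2 * ε * j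
  have htranslate : ∀ s, (· - s • c) ⁻¹' E = unitCube (a + s • c) ∩ h ⁻¹' Icc s (s + ε) :=
    preimage_sub_smul_unitCube_inter_preimage_Icc hshift a ε
  have hdisj : ∀ K, PairwiseDisjoint ↑(Finset.range K) fun j => (· - w j • c) ⁻¹' E := by
    intro K i _ j _ hij
    simp only [Function.onFun, htranslate]
    refine Disjoint.inter_right' _ (Disjoint.inter_left' _ (disjoint_left.2 fun x hi hj => ?_))
    simp only [w, mem_preimage, mem_Icc] at hi hj
    rcases Nat.lt_or_gt_of_ne hij with hlt | hlt
    · have : (i : ℝ) + 1 ≤ j := by exact_mod_cast hlt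
      nlinarith
    · have : (j : ℝ) + 1 ≤ i := by exact_mod_cast hlt
      nlinarith
  have hstep : ∀ j, volume (unitCube (a + w (j + 1) • c) \ unitCube (a + w j • c))
      ≤ ENNReal.ofReal (2 * ε * ∑ i, |c i|) := by
    intro j
    convert volume_unitCube_add_smul_sdiff_le a c (w (j + 1)) (w j) using 3
    simp only [w]
    push_cast
    rw [show 2 * ε * (j + 1) - 2 * ε * j = 2 * ε by ring, abs_of_pos (by positivity)]
  refine ENNReal.le_of_forall_natCast_mul_le_add ENNReal.one_ne_top fun K => ?_
  calc (K : ℝ≥0∞) * volume E ≤ ↑(K + 1) * volume E := by gcongr; omega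
    _ = ∑ j ∈ Finset.range (K + 1), volume ((· - w j • c) ⁻¹' E) := by
        simp only [sub_eq_add_neg, measure_preimage_add_right, Finset.sum_const,
          Finset.card_range, nsmul_eq_mul]
    _ = volume (⋃ j ∈ Finset.range (K + 1), (· - w j • c) ⁻¹' E) :=
        (measure_biUnion_finset (hdisj _) fun j _ =>
          (measurableSet_unitCube a).inter (hh measurableSet_Icc) |>.preimage
            (measurable_id.sub_const _)).symm
    _ ≤ volume (⋃ j ∈ Finset.range (K + 1), unitCube (a + w j • c)) := by
        gcongr with j
        rw [htranslate]
        exact inter_subset_left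
    _ ≤ volume (unitCube (a + w 0 • c)) + K * ENNReal.ofReal (2 * ε * ∑ i, |c i|) :=
        measure_biUnion_range_succ_le volume hstep K
    _ = 1 + K * ENNReal.ofReal (2 * ε * ∑ i, |c i|) := by rw [volume_unitCube]

theorem ProbabilityTheory.iIndepFun.map_eq_volume_restrict_unitCube {Ω : Type*}
    [MeasurableSpace Ω] {μ : Measure Ω} [Fintype ι] {X : ι → Ω → ℝ}
    (hX : ∀ i, Measurable (X i)) (hind : iIndepFun X μ)
    (hlaw : ∀ i, μ.map (X i) = volume.restrict (Ioc 0 1)) :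
    μ.map (fun ω i => X i ω) = volume.restrict (unitCube 0) := by
  rw [hind.map_fun_eq_pi_map fun i => (hX i).aemeasurable, volume_pi, unitCube,
    Measure.restrict_pi_pi]
  simp [hlaw]

end UnitCube

theorem Matrix.mulVec_add_smul_inv_mulVec_single {m R : Type*} [Fintype m] [DecidableEq m]
    [CommRing R] (A : Matrix m m R) (hA : IsUnit A.det) (k : m) (x : m → R) (s : R) :
    A *ᵥ (x + s • A⁻¹ *ᵥ Pi.single k 1) = A *ᵥ x + Pi.single k s := by
  rw [Matrix.mulVec_add, Matrix.mulVec_smul, Matrix.mulVec_mulVec, Matrix.mul_nonsing_inv A hA,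
    Matrix.one_mulVec, ← Pi.single_smul, smul_eq_mul, mul_one]

theorem stmt9_general {n : ℕ} {Ω : Type*} [MeasurableSpace Ω] (μ : Measure Ω)
    (X : Fin (n+1) → Ω → ℝ) (hXmeas : ∀ i, Measurable (X i))
    (hXindep : iIndepFun X μ)
    (hXlaw : ∀ i, μ.map (X i) = volume.restrict (Set.Ioc (0:ℝ) 1))
    (A : Matrix (Fin (n+1)) (Fin (n+1)) ℝ) (hA : IsUnit A.det)
    (g : (Fin n → ℝ) → ℝ) (hg : Measurable g) (ε : ℝ) (hε : 0 < ε) :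
    μ {ω | A.mulVec (fun i => X i ω) (Fin.last n) ∈
        Set.Icc (g fun j => A.mulVec (fun i => X i ω) j.castSucc)
          (g (fun j => A.mulVec (fun i => X i ω) j.castSucc) + ε)} ≤
      ENNReal.ofReal (2 * ε * ∑ k, |A⁻¹.mulVec (Pi.single (Fin.last n) 1) k|) := by
  set h : (Fin (n + 1) → ℝ) → ℝ :=
    fun x => (A *ᵥ x) (Fin.last n) - g fun j => (A *ᵥ x) j.castSucc
  have hh : Measurable h := by fun_prop
  have hshift : ∀ x (s : ℝ), h (x + s • A⁻¹ *ᵥ Pi.single (Fin.last n) 1) = h x + s := by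
    intro x s
    simp only [h]
    rw [A.mulVec_add_smul_inv_mulVec_single hA]
    simp only [Pi.add_apply, Pi.single_eq_same, Pi.single_eq_of_ne (Fin.castSucc_ne_last _),
      add_zero]
    ring
  have hevent : {ω | A.mulVec (fun i => X i ω) (Fin.last n) ∈
        Set.Icc (g fun j => A.mulVec (fun i => X i ω) j.castSucc)
          (g (fun j => A.mulVec (fun i => X i ω) j.castSucc) + ε)} =
      (fun ω i => X i ω) ⁻¹' (h ⁻¹' Icc 0 ε) := by
    ext ω
    simp [h, sub_nonneg, add_comm]
  rw [hevent, ← Measure.map_apply (measurable_pi_lambda _ hXmeas) (hh measurableSet_Icc),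
    hXindep.map_eq_volume_restrict_unitCube hXmeas hXlaw,
    Measure.restrict_apply (hh measurableSet_Icc), inter_comm]
  exact volume_unitCube_inter_preimage_Icc_le _ hh hshift hε 0

/-- Let X₁, …, X_{n+1} be independent random variables uniform on (0,1],
let A ∈ ℝ^{(n+1)×(n+1)} be invertible, let (Y₁, …, Yₙ, Z)ᵀ = A·(X₁, …, X_{n+1})ᵀ,
let g be measurable and ε > 0. Then
P[Z ∈ [g(Y), g(Y)+ε]] ≤ 2ε · ‖A⁻¹e_{n+1}‖₁. -/
theorem stmt9 {n : ℕ} {Ω : Type*} [MeasurableSpace Ω] (μ : Measure Ω)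
    [IsProbabilityMeasure μ]
    (X : Fin (n+1) → Ω → ℝ) (hXmeas : ∀ i, Measurable (X i))
    (hXindep : iIndepFun X μ)
    (hXlaw : ∀ i, μ.map (X i) = volume.restrict (Set.Ioc (0:ℝ) 1))
    (A : Matrix (Fin (n+1)) (Fin (n+1)) ℝ) (hA : IsUnit A.det)
    (g : (Fin n → ℝ) → ℝ) (hg : Measurable g) (ε : ℝ) (hε : 0 < ε) :
    μ {ω | A.mulVec (fun i => X i ω) (Fin.last n) ∈
        Set.Icc (g fun j => A.mulVec (fun i => X i ω) j.castSucc)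
          (g (fun j => A.mulVec (fun i => X i ω) j.castSucc) + ε)} ≤
      ENNReal.ofReal (2 * ε * ∑ k, |A⁻¹.mulVec (Pi.single (Fin.last n) 1) k|) :=
  stmt9_general μ X hXmeas hXindep hXlaw A hA g hg ε hε
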